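/- Let 2 ≤ δ ≤ 8 and let D, N be classes in the del Pezzo lattice of rank 1+δ such that D·L ≥ 0 and N·L ≥ 0 for every (−1)-class L, and such that D·N = 0. If D is not of the form m·Q for some nonnegative integer m and some conic class Q, then N = 0. (Lattice form of the corollary that a nef divisor on a del Pezzo surface which is not a multiple of a conic has intersection zero with a nef divisor only if the latter is zero.) -/
import Mathlib


/-- A class in the del Pezzo lattice of rank `1 + δ`: the pair `(a, b)`
represents `a·ℓ − b₁e₁ − ⋯ − b_δ e_δ`. -/
abbrev Cls (δ : ℕ) : Type := ℤ × (Fin δ → ℤ)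

/-- The intersection product: `(a;b)·(a';b') = a a' − Σ bᵢ bᵢ'`. -/
def ip {δ : ℕ} (x y : Cls δ) : ℤ := x.1 * y.1 - ∑ i, x.2 i * y.2 i

/-- The canonical class `K = −3ℓ + e₁ + ⋯ + e_δ`, i.e. `(−3; −1, …, −1)`. -/
def Kcls (δ : ℕ) : Cls δ := (-3, fun _ => -1)

/-- A conic class: `Q·Q = 0` and `K·Q = −2`. -/
def IsConic {δ : ℕ} (Q : Cls δ) : Prop := ip Q Q = 0 ∧ ip (Kcls δ) Q = -2

/-- A `(−1)`-class: `L·L = −1` and `K·L = −1`. -/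
def IsMinusOne {δ : ℕ} (L : Cls δ) : Prop := ip L L = -1 ∧ ip (Kcls δ) L = -1

/-- Membership in the Weyl group `W_δ`: a ℤ-linear automorphism of the lattice
preserving the intersection form and fixing the canonical class. -/
def IsWeyl {δ : ℕ} (g : Cls δ ≃ₗ[ℤ] Cls δ) : Prop :=
  (∀ x y : Cls δ, ip (g x) (g y) = ip x y) ∧ g (Kcls δ) = Kcls δ


lemma sum_mul_single {δ : ℕ} (v : Fin δ → ℤ) (p : Fin δ) (c : ℤ) :
    ∑ t, v t * (Pi.single p c : Fin δ → ℤ) t = v p * c := by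
  simp [Pi.single_apply, mul_ite, Finset.sum_ite_eq]

lemma ip_comm {δ : ℕ} (x y : Cls δ) : ip x y = ip y x := by
  simp [ip, mul_comm]

lemma ip_add_left {δ : ℕ} (x y z : Cls δ) : ip (x + y) z = ip x z + ip y z := by
  simp [ip, add_mul, Finset.sum_add_distrib]
  try ring

lemma ip_smul_left {δ : ℕ} (c : ℤ) (x z : Cls δ) : ip (c • x) z = c * ip x z := by
  simp [ip, Finset.mul_sum, mul_sub, mul_assoc]

lemma ip_add_right {δ : ℕ} (x y z : Cls δ) : ip z (x + y) = ip z x + ip z y := by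
  rw [ip_comm, ip_add_left, ip_comm x z, ip_comm y z]

lemma ip_smul_right {δ : ℕ} (c : ℤ) (x z : Cls δ) : ip z (c • x) = c * ip z x := by
  rw [ip_comm, ip_smul_left, ip_comm]

lemma ip_K {δ : ℕ} (x : Cls δ) : ip (Kcls δ) x = -3 * x.1 + ∑ i, x.2 i := by
  simp [ip, Kcls]
  try ring


def rcls {δ : ℕ} (i j k : Fin δ) : Cls δ :=
  (1, (Pi.single i 1 : Fin δ → ℤ) + Pi.single j 1 + Pi.single k 1)

lemma ip_rcls {δ : ℕ} {i j k : Fin δ} (x : Cls δ) :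
    ip x (rcls i j k) = x.1 - (x.2 i + x.2 j + x.2 k) := by
  simp [ip, rcls, mul_add, Finset.sum_add_distrib, sum_mul_single]

lemma rcls_rcls {δ : ℕ} {i j k : Fin δ} (hij : i ≠ j) (hik : i ≠ k) (hjk : j ≠ k) :
    ip (rcls i j k) (rcls i j k) = -2 := by
  rw [ip_rcls]
  simp [rcls, Pi.single_apply, hij, hik, hjk, hij.symm, hik.symm, hjk.symm]

lemma K_rcls {δ : ℕ} {i j k : Fin δ} (hij : i ≠ j) (hik : i ≠ k) (hjk : j ≠ k) :
    ip (Kcls δ) (rcls i j k) = 0 := by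
  rw [ip_K]
  simp [rcls, Finset.sum_add_distrib, Pi.single_apply, Finset.sum_ite_eq, hij, hik, hjk]

def rfl3 {δ : ℕ} (r x : Cls δ) : Cls δ := x + (ip x r) • r

lemma rfl3_ip {δ : ℕ} {r : Cls δ} (hr : ip r r = -2) (x y : Cls δ) :
    ip (rfl3 r x) (rfl3 r y) = ip x y := by
  simp only [rfl3, ip_add_left, ip_add_right, ip_smul_left, ip_smul_right, hr]
  rw [ip_comm r y]
  ring

lemma rfl3_invol {δ : ℕ} {r : Cls δ} (hr : ip r r = -2) (x : Cls δ) :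
    rfl3 r (rfl3 r x) = x := by
  have h : ip (rfl3 r x) r = -(ip x r) := by
    simp only [rfl3, ip_add_left, ip_smul_left, hr]; ring
  show rfl3 r x + ip (rfl3 r x) r • r = x
  rw [h, neg_smul, rfl3, add_assoc, add_neg_cancel, add_zero]

lemma rfl3_minusone {δ : ℕ} {r : Cls δ} (hr : ip r r = -2) (hK : ip (Kcls δ) r = 0)
    {L : Cls δ} (hL : IsMinusOne L) : IsMinusOne (rfl3 r L) := by
  refine ⟨by rw [rfl3_ip hr]; exact hL.1, ?_⟩
  simp only [rfl3, ip_add_right, ip_smul_right, hK, mul_zero, add_zero]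
  exact hL.2

lemma rfl3_conic {δ : ℕ} {r : Cls δ} (hr : ip r r = -2) (hK : ip (Kcls δ) r = 0)
    {Q : Cls δ} (hQ : IsConic Q) : IsConic (rfl3 r Q) := by
  refine ⟨by rw [rfl3_ip hr]; exact hQ.1, ?_⟩
  simp only [rfl3, ip_add_right, ip_smul_right, hK, mul_zero, add_zero]
  exact hQ.2

lemma rfl3_smul {δ : ℕ} (r : Cls δ) (c : ℤ) (x : Cls δ) :
    rfl3 r (c • x) = c • rfl3 r x := by
  simp only [rfl3, ip_smul_left, smul_add, mul_smul]

lemma rfl3_nef {δ : ℕ} {r : Cls δ} (hr : ip r r = -2) (hK : ip (Kcls δ) r = 0)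
    {D : Cls δ} (hD : ∀ L, IsMinusOne L → 0 ≤ ip D L) :
    ∀ L, IsMinusOne L → 0 ≤ ip (rfl3 r D) L := by
  intro L hL
  have h1 : ip (rfl3 r D) L = ip D (rfl3 r L) := by
    conv_lhs => rw [← rfl3_invol hr L]
    rw [rfl3_ip hr]
  rw [h1]
  exact hD _ (rfl3_minusone hr hK hL)

lemma rfl3_fst {δ : ℕ} (r x : Cls δ) : (rfl3 r x).1 = x.1 + ip x r * r.1 := rfl

lemma nef_coord {δ : ℕ} {D : Cls δ} (hD : ∀ L, IsMinusOne L → 0 ≤ ip D L) (i : Fin δ) :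
    0 ≤ D.2 i := by
  have h := hD (0, -(Pi.single i 1 : Fin δ → ℤ)) ?_
  · simpa [ip, sum_mul_single] using h
  · constructor
    · simp [ip, Pi.single_apply, Finset.sum_ite_eq]
    · rw [ip_K]; simp [Pi.single_apply, Finset.sum_ite_eq]

lemma nef_pair {δ : ℕ} {D : Cls δ} (hD : ∀ L, IsMinusOne L → 0 ≤ ip D L)
    {i j : Fin δ} (hij : i ≠ j) : D.2 i + D.2 j ≤ D.1 := by
  have h := hD (1, (Pi.single i 1 : Fin δ → ℤ) + Pi.single j 1) ?_
  · simp only [ip, Finset.sum_add_distrib, Pi.add_apply, mul_add, sum_mul_single] at h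
    linarith [h]
  · constructor
    · simp [ip, Finset.sum_add_distrib, Pi.add_apply, mul_add, add_mul, sum_mul_single,
        Pi.single_apply, hij, hij.symm]
    · rw [ip_K]; simp [Pi.single_apply, Finset.sum_add_distrib, Finset.sum_ite_eq]

lemma conic_std {δ : ℕ} (p : Fin δ) : IsConic ((1 : ℤ), (Pi.single p 1 : Fin δ → ℤ)) := by
  constructor
  · simp [ip, Pi.single_apply, Finset.sum_ite_eq]
  · rw [ip_K]; simp [Pi.single_apply, Finset.sum_ite_eq]

lemma lorentz {δ : ℕ} (D x : Cls δ) (hD2 : 0 < ip D D) (hx : ip D x = 0)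
    (hx2 : 0 ≤ ip x x) : x = 0 := by
  have hA : ∑ i, D.2 i ^ 2 < D.1 ^ 2 := by
    have := hD2; simp only [ip] at this
    have e : ∀ i : Fin δ, D.2 i * D.2 i = D.2 i ^ 2 := fun i => (sq (D.2 i)).symm ▸ by ring
    simp only [e] at this; nlinarith [this]
  have hB : ∑ i, x.2 i ^ 2 ≤ x.1 ^ 2 := by
    simp only [ip] at hx2
    have e : ∀ i : Fin δ, x.2 i * x.2 i = x.2 i ^ 2 := fun i => by ring
    simp only [e] at hx2; linarith
  have hP : D.1 * x.1 = ∑ i, D.2 i * x.2 i := by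
    simp only [ip] at hx; linarith
  have hCS := Finset.sum_mul_sq_le_sq_mul_sq Finset.univ (fun i => D.2 i) (fun i => x.2 i)
  have hAnn : 0 ≤ ∑ i, D.2 i ^ 2 := Finset.sum_nonneg fun i _ => sq_nonneg _
  have hBnn : 0 ≤ ∑ i, x.2 i ^ 2 := Finset.sum_nonneg fun i _ => sq_nonneg _
  have key : D.1 ^ 2 * x.1 ^ 2 ≤ (∑ i, D.2 i ^ 2) * x.1 ^ 2 := by
    calc D.1 ^ 2 * x.1 ^ 2 = (D.1 * x.1) ^ 2 := by ring
      _ = (∑ i, D.2 i * x.2 i) ^ 2 := by rw [hP]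
      _ ≤ (∑ i, D.2 i ^ 2) * ∑ i, x.2 i ^ 2 := hCS
      _ ≤ (∑ i, D.2 i ^ 2) * x.1 ^ 2 := mul_le_mul_of_nonneg_left hB hAnn
  have hx0sq : x.1 ^ 2 ≤ 0 := by nlinarith [key, hA, sq_nonneg x.1]
  have hx0 : x.1 = 0 := pow_eq_zero_iff (n := 2) (by norm_num) |>.1
    (le_antisymm hx0sq (sq_nonneg _))
  have hBz : ∑ i, x.2 i ^ 2 = 0 := le_antisymm (by rw [hx0] at hB; simpa using hB) hBnn
  have hall : ∀ i ∈ Finset.univ, x.2 i ^ 2 = 0 :=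
    (Finset.sum_eq_zero_iff_of_nonneg (fun i _ => sq_nonneg _)).1 hBz
  have : x.2 = 0 := by
    funext i
    exact pow_eq_zero_iff (n := 2) (by norm_num) |>.1 (hall i (Finset.mem_univ i))
  exact Prod.ext hx0 this

set_option maxHeartbeats 1000000 in
lemma chamber {δ : ℕ} (h1 : 2 ≤ δ) (h2 : δ ≤ 8) (D : Cls δ)
    (hb : ∀ i, 0 ≤ D.2 i)
    (hpair : ∀ i j : Fin δ, i ≠ j → D.2 i + D.2 j ≤ D.1)
    (hch : ∀ i j k : Fin δ, i ≠ j → i ≠ k → j ≠ k → D.2 i + D.2 j + D.2 k ≤ D.1)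
    (hiso : ip D D ≤ 0) :
    ∃ m : ℕ, ∃ Q : Cls δ, IsConic Q ∧ D = (m : ℤ) • Q := by
  haveI : Nontrivial (Fin δ) := Fin.nontrivial_iff_two_le.mpr h1
  have hiso' : D.1 ^ 2 ≤ ∑ i, D.2 i ^ 2 := by
    simp only [ip] at hiso
    have e : ∀ i : Fin δ, D.2 i * D.2 i = D.2 i ^ 2 := fun i => by ring
    simp only [e] at hiso; nlinarith [hiso]
  obtain ⟨p, -, hp⟩ := Finset.exists_max_image Finset.univ D.2 Finset.univ_nonempty
  set s1 : Finset (Fin δ) := Finset.univ.erase p with hs1def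
  have hs1card : s1.card = δ - 1 := by
    rw [hs1def, Finset.card_erase_of_mem (Finset.mem_univ p)]
    simp
  have hs1 : s1.Nonempty := Finset.card_pos.1 (by omega)
  obtain ⟨q, hq1, hq⟩ := Finset.exists_max_image s1 D.2 hs1
  have hqp : q ≠ p := Finset.ne_of_mem_erase hq1
  set s2 : Finset (Fin δ) := s1.erase q with hs2def
  have hs2card : s2.card = δ - 2 := by
    rw [hs2def, Finset.card_erase_of_mem hq1, hs1card]
    omega
  have hsum1 : ∑ i, D.2 i ^ 2 = D.2 p ^ 2 + ∑ i ∈ s1, D.2 i ^ 2 :=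
    (Finset.add_sum_erase _ _ (Finset.mem_univ p)).symm
  have hsum2 : ∑ i ∈ s1, D.2 i ^ 2 = D.2 q ^ 2 + ∑ i ∈ s2, D.2 i ^ 2 :=
    (Finset.add_sum_erase _ _ hq1).symm
  have ha : 0 ≤ D.1 := le_trans (add_nonneg (hb q) (hb p)) (hpair q p hqp)
  -- main claim: second largest coordinate is zero
  have hq0 : D.2 q = 0 := by
    by_contra hne
    have hqpos : 0 < D.2 q := lt_of_le_of_ne (hb q) (Ne.symm hne)
    by_cases hδ3 : 3 ≤ δ
    · have hs2 : s2.Nonempty := Finset.card_pos.1 (by omega)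
      obtain ⟨r, hr2, hr⟩ := Finset.exists_max_image s2 D.2 hs2
      have hrq : r ≠ q := Finset.ne_of_mem_erase hr2
      have hrp : r ≠ p := Finset.ne_of_mem_erase (Finset.mem_of_mem_erase hr2)
      set s3 : Finset (Fin δ) := s2.erase r with hs3def
      have hs3card : s3.card = δ - 3 := by
        rw [hs3def, Finset.card_erase_of_mem hr2, hs2card]
        omega
      have hsum3 : ∑ i ∈ s2, D.2 i ^ 2 = D.2 r ^ 2 + ∑ i ∈ s3, D.2 i ^ 2 :=
        (Finset.add_sum_erase _ _ hr2).symm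
      have hbound : ∑ i ∈ s3, D.2 i ^ 2 ≤ 5 * D.2 r ^ 2 := by
        have h5 : ∑ i ∈ s3, D.2 i ^ 2 ≤ s3.card • (D.2 r ^ 2) := by
          refine Finset.sum_le_card_nsmul _ _ _ ?_
          intro x hx
          have hxr : D.2 x ≤ D.2 r := hr x (Finset.mem_of_mem_erase hx)
          have := hb x
          nlinarith
        rw [hs3card] at h5
        have : ((δ - 3 : ℕ) : ℤ) * D.2 r ^ 2 ≤ 5 * D.2 r ^ 2 := by
          have hc : ((δ - 3 : ℕ) : ℤ) ≤ 5 := by omega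
          nlinarith [sq_nonneg (D.2 r)]
        calc ∑ i ∈ s3, D.2 i ^ 2 ≤ ((δ - 3 : ℕ) : ℤ) * D.2 r ^ 2 := by
              simpa [nsmul_eq_mul] using h5
          _ ≤ 5 * D.2 r ^ 2 := this
      have htriple : D.2 p + D.2 q + D.2 r ≤ D.1 :=
        hch p q r hqp.symm hrp.symm hrq.symm
      have hpq : D.2 q ≤ D.2 p := hp q (Finset.mem_univ q)
      have hqr : D.2 r ≤ D.2 q := hq r (Finset.mem_of_mem_erase hr2)
      have hbr : 0 ≤ D.2 r := hb r
      have hsnn : 0 ≤ D.2 p + D.2 q + D.2 r := by linarith [hb p]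
      have hsq : (D.2 p + D.2 q + D.2 r) ^ 2 ≤ D.1 ^ 2 := pow_le_pow_left₀ hsnn htriple 2
      have hS : D.1 ^ 2 ≤ D.2 p ^ 2 + D.2 q ^ 2 + D.2 r ^ 2 + 5 * D.2 r ^ 2 := by
        rw [hsum1, hsum2, hsum3] at hiso'
        linarith [hbound]
      have hkey : 2 * (D.2 p * D.2 q + D.2 p * D.2 r + D.2 q * D.2 r) ≤ 5 * D.2 r ^ 2 := by
        nlinarith [hsq, hS]
      have e1 : 0 ≤ (D.2 q - D.2 r) * (D.2 q - D.2 r) := mul_self_nonneg _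
      have e2 : 0 ≤ (D.2 q - D.2 r) * D.2 r := mul_nonneg (by linarith) hbr
      have e3 : 0 ≤ (D.2 p - D.2 q) * (D.2 q - D.2 r) := mul_nonneg (by linarith) (by linarith)
      have e4 : 0 ≤ (D.2 p - D.2 q) * D.2 r := mul_nonneg (by linarith) hbr
      have e5 : 0 < D.2 q * D.2 q := mul_pos hqpos hqpos
      nlinarith [hkey, e1, e2, e3, e4, e5]
    · -- δ = 2
      have hs2e : s2 = ∅ := Finset.card_eq_zero.1 (by omega)
      have hsumz : ∑ i ∈ s2, D.2 i ^ 2 = 0 := by rw [hs2e]; simp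
      have hpq : D.2 q ≤ D.2 p := hp q (Finset.mem_univ q)
      have hpair' : D.2 p + D.2 q ≤ D.1 := hpair p q hqp.symm
      have hsnn : 0 ≤ D.2 p + D.2 q := add_nonneg (hb p) (hb q)
      have hsq2 : (D.2 p + D.2 q) ^ 2 ≤ D.1 ^ 2 := pow_le_pow_left₀ hsnn hpair' 2
      rw [hsum1, hsum2, hsumz] at hiso'
      nlinarith [hsq2, hiso', mul_pos (lt_of_lt_of_le hqpos hpq) hqpos]
  have hallz : ∀ j, j ≠ p → D.2 j = 0 := by
    intro j hj
    have hjs1 : j ∈ s1 := Finset.mem_erase.2 ⟨hj, Finset.mem_univ j⟩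
    have := hq j hjs1
    have := hb j
    omega
  have hs1z : ∑ i ∈ s1, D.2 i ^ 2 = 0 := by
    refine Finset.sum_eq_zero ?_
    intro x hx
    rw [hallz x (Finset.ne_of_mem_erase hx)]
    ring
  have hap : D.1 = D.2 p := by
    obtain ⟨j, hjp⟩ := exists_ne p
    have h1' : D.2 p + D.2 j ≤ D.1 := hpair p j (Ne.symm hjp)
    rw [hallz j hjp] at h1'
    have h2' : D.1 ^ 2 ≤ D.2 p ^ 2 := by
      rw [hsum1, hs1z] at hiso'; linarith
    have hle : D.1 ≤ D.2 p := by nlinarith [h2', ha, hb p]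
    exact le_antisymm hle (by linarith [h1'])
  refine ⟨D.1.toNat, ((1 : ℤ), (Pi.single p 1 : Fin δ → ℤ)), conic_std p, ?_⟩
  have htn : ((D.1.toNat : ℤ)) = D.1 := Int.toNat_of_nonneg ha
  refine Prod.ext (by simp [htn]) ?_
  funext j
  by_cases hjp : j = p
  · subst hjp
    simp [htn, hap, hb]
  · simp [Pi.single_apply, hjp, hallz j hjp]

lemma nef_fst_nonneg {δ : ℕ} (h1 : 2 ≤ δ) {D : Cls δ}
    (hD : ∀ L, IsMinusOne L → 0 ≤ ip D L) : 0 ≤ D.1 := by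
  haveI : Nontrivial (Fin δ) := Fin.nontrivial_iff_two_le.mpr h1
  obtain ⟨j, hj⟩ := exists_ne (⟨0, by omega⟩ : Fin δ)
  exact le_trans (add_nonneg (nef_coord hD j) (nef_coord hD _)) (nef_pair hD hj)

lemma key (δ : ℕ) (h1 : 2 ≤ δ) (h2 : δ ≤ 8) :
    ∀ (n : ℕ) (D : Cls δ), D.1.toNat ≤ n →
      (∀ L, IsMinusOne L → 0 ≤ ip D L) → ip D D ≤ 0 →
      ∃ m : ℕ, ∃ Q : Cls δ, IsConic Q ∧ D = (m : ℤ) • Q := by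
  intro n
  induction n with
  | zero =>
      intro D hle hD _hiso
      haveI : Nontrivial (Fin δ) := Fin.nontrivial_iff_two_le.mpr h1
      have hb := nef_coord hD
      have ha : 0 ≤ D.1 := nef_fst_nonneg h1 hD
      have ha0 : D.1 = 0 := by omega
      have hbz : ∀ i, D.2 i = 0 := by
        intro i
        obtain ⟨j, hj⟩ := exists_ne i
        have h := nef_pair hD (Ne.symm hj)
        have := hb i; have := hb j; omega
      refine ⟨0, ((1 : ℤ), (Pi.single ⟨0, by omega⟩ 1 : Fin δ → ℤ)), conic_std _, ?_⟩
      refine Prod.ext (by simp [ha0]) ?_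
      funext i
      simp [hbz i]
  | succ n IH =>
      intro D hle hD hiso
      have hb := nef_coord hD
      by_cases hch : ∀ i j k : Fin δ, i ≠ j → i ≠ k → j ≠ k → D.2 i + D.2 j + D.2 k ≤ D.1
      · exact chamber h1 h2 D hb (fun i j h => nef_pair hD h) hch hiso
      · push_neg at hch
        obtain ⟨i, j, k, hij, hik, hjk, hlt⟩ := hch
        have hrr : ip (rcls i j k) (rcls i j k) = -2 := rcls_rcls hij hik hjk
        have hKr : ip (Kcls δ) (rcls i j k) = 0 := K_rcls hij hik hjk
        have hD'nef := rfl3_nef hrr hKr hD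
        have hD'iso : ip (rfl3 (rcls i j k) D) (rfl3 (rcls i j k) D) ≤ 0 := by
          rw [rfl3_ip hrr]; exact hiso
        have hip : ip D (rcls i j k) = D.1 - (D.2 i + D.2 j + D.2 k) := ip_rcls D
        have hfst : (rfl3 (rcls i j k) D).1 = D.1 + ip D (rcls i j k) * 1 :=
          rfl3_fst (rcls i j k) D
        have hD'lt : (rfl3 (rcls i j k) D).1 < D.1 := by
          rw [hfst, hip]; linarith
        have hD'nn : 0 ≤ (rfl3 (rcls i j k) D).1 := nef_fst_nonneg h1 hD'nef
        have hle' : (rfl3 (rcls i j k) D).1.toNat ≤ n := by omega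
        obtain ⟨m, Q, hQ, hEq⟩ := IH (rfl3 (rcls i j k) D) hle' hD'nef hD'iso
        refine ⟨m, rfl3 (rcls i j k) Q, rfl3_conic hrr hKr hQ, ?_⟩
        have hDD : D = rfl3 (rcls i j k) (rfl3 (rcls i j k) D) := (rfl3_invol hrr D).symm
        rw [hDD, hEq, rfl3_smul]


/-- For 2 ≤ δ ≤ 8, if D and N pair nonnegatively with every (−1)-class,
D·N = 0, and D is not a nonnegative multiple of a conic class, then N = 0. -/
theorem stmt18 (δ : ℕ) (h1 : 2 ≤ δ) (h2 : δ ≤ 8) (D N : Cls δ)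
    (hD : ∀ L : Cls δ, IsMinusOne L → 0 ≤ ip D L)
    (hN : ∀ L : Cls δ, IsMinusOne L → 0 ≤ ip N L)
    (hDN : ip D N = 0)
    (hnot : ¬ ∃ (m : ℕ) (Q : Cls δ), IsConic Q ∧ D = (m : ℤ) • Q) :
    N = 0 := by
  rcases le_or_gt (ip D D) 0 with hD2 | hD2
  · exact absurd (key δ h1 h2 D.1.toNat D le_rfl hD hD2) hnot
  · by_cases hN2 : ip N N ≤ 0
    · obtain ⟨m, Q, hQ, hNeq⟩ := key δ h1 h2 N.1.toNat N le_rfl hN hN2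
      rcases Nat.eq_zero_or_pos m with rfl | hm
      · rw [hNeq]; simp
      · exfalso
        have hmz : (0 : ℤ) < (m : ℤ) := by exact_mod_cast hm
        have hDQ : ip D Q = 0 := by
          have h := hDN
          rw [hNeq, ip_smul_right] at h
          rcases mul_eq_zero.1 h with h' | h'
          · exact absurd h' (by positivity)
          · exact h'
        have hQ0 : Q = 0 := lorentz D Q hD2 hDQ (le_of_eq hQ.1.symm)
        have hc := hQ.2
        rw [hQ0] at hc
        simp [ip] at hc
    · push_neg at hN2
      have hD0 : D = 0 := lorentz N D hN2 (by rw [ip_comm]; exact hDN) (le_of_lt hD2)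
      rw [hD0] at hD2
      simp [ip] at hD2
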